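/- arXiv:2508.15562 — 4 statements merged into one kernel-verified Lean document; each statement's English description precedes it below -/
import Mathlib

section
/- For every n ≥ 1, nonempty finite sets V_1, ..., V_n, and every d with 0 ≤ d ≤ n-1, the d-skeleton of the pseudosphere Ψ({(p_i, V_i) | i ∈ [n]}) is shellable. -/
/-!
Fix any linear order on the values and order the facets of the `d`-skeleton (the faces with
`d + 1` vertices) lexicographically by their profile: the sequence over the processes
`0, …, n - 1` of the value a facet assigns to each, an absent process counting as `⊤`.
If `ψ` precedes `s` and `t` is a common face, look at the first process `i` where they
differ; `ψ` has a value `u` there. Removing from `s` its vertex at process `i` (or, if `s`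
has none, a vertex of `s \ t` at a later process) and adding `(i, u)` gives a facet that
precedes `s` and contains a codimension-one face of `s` containing `t`.
-/

def IsComplex {V : Type*} (S : Set (Finset V)) : Prop :=
  ∀ s ∈ S, s.Nonempty ∧ ∀ t : Finset V, t ⊆ s → t.Nonempty → t ∈ S

def IsFacet {V : Type*} (S : Set (Finset V)) (s : Finset V) : Prop :=
  s ∈ S ∧ ∀ t ∈ S, s ⊆ t → s = t

def IsPure {V : Type*} (S : Set (Finset V)) (d : ℕ) : Prop :=
  ∀ s, IsFacet S s → s.card = d + 1

/-- An ordering `φ 0, …, φ N` of facets (all of cardinality `d+1`) is a shelling order: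
for every `k ≥ 1`, the intersection of `φ k` with the union of the previous facets is a
nonempty union of `(d-1)`-dimensional faces (i.e. faces of cardinality `d`) of `φ k`. -/
def IsShellingOrder {V : Type*} (d N : ℕ) (φ : Fin (N + 1) → Finset V) : Prop :=
  ∀ k : Fin (N + 1), 0 < (k : ℕ) →
    (∃ t : Finset V, t ⊆ φ k ∧ t.card = d ∧ ∃ i : Fin (N + 1), (i : ℕ) < (k : ℕ) ∧ t ⊆ φ i) ∧
    (∀ t : Finset V, t.Nonempty → t ⊆ φ k →
      (∃ i : Fin (N + 1), (i : ℕ) < (k : ℕ) ∧ t ⊆ φ i) →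
      ∃ t' : Finset V, t ⊆ t' ∧ t' ⊆ φ k ∧ t'.card = d ∧
        ∃ i : Fin (N + 1), (i : ℕ) < (k : ℕ) ∧ t' ⊆ φ i)

/-- A complex is shellable of dimension `d` if it is pure of dimension `d` and its facets
admit an enumeration which is a shelling order. -/
def Shellable {V : Type*} (S : Set (Finset V)) (d : ℕ) : Prop :=
  IsPure S d ∧ ∃ (N : ℕ) (φ : Fin (N + 1) → Finset V),
    Function.Injective φ ∧ (∀ i, IsFacet S (φ i)) ∧
    (∀ s, IsFacet S s → ∃ i, φ i = s) ∧ IsShellingOrder d N φ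

/-- The pseudosphere `Ψ({(p_i, V_i) | i ∈ [n]})`: faces are nonempty sets of pairs `(i, v)`
with `v ∈ Vs i`, containing at most one vertex per process `i`. -/
def Pseudosphere (n : ℕ) {α : Type*} (Vs : Fin n → Finset α) : Set (Finset (Fin n × α)) :=
  {s | s.Nonempty ∧ (∀ p ∈ s, p.2 ∈ Vs p.1) ∧ ∀ p ∈ s, ∀ q ∈ s, p.1 = q.1 → p = q}

open Finset

theorem Set.Finite.exists_strictMono_enum {V β : Type*} [LinearOrder β] {A : Set V}
    (hA : A.Finite) (hne : A.Nonempty) {f : V → β} (hf : Set.InjOn f A) :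
    ∃ (N : ℕ) (φ : Fin (N + 1) → V),
      (∀ i, φ i ∈ A) ∧ (∀ a ∈ A, ∃ i, φ i = a) ∧ StrictMono (f ∘ φ) := by
  classical
  set B := (hA.image f).toFinset
  have hB : B.card = B.card - 1 + 1 :=
    (Nat.succ_pred_eq_of_pos (card_pos.2 ((hA.image f).toFinset_nonempty.2 (hne.image f)))).symm
  set e := B.orderEmbOfFin hB
  have : Nonempty V := ⟨hne.some⟩
  have he : ∀ i, ∃ a ∈ A, f a = e i := fun i =>
    (hA.image f).mem_toFinset.1 (B.orderEmbOfFin_mem hB i)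
  have hfφ : f ∘ (fun i => Function.invFunOn f A (e i)) = e :=
    funext fun i => Function.invFunOn_eq (he i)
  refine ⟨B.card - 1, fun i => Function.invFunOn f A (e i), fun i => Function.invFunOn_mem (he i),
    fun a ha => ?_, by rw [hfφ]; exact e.strictMono⟩
  obtain ⟨i, hi⟩ : f a ∈ Set.range e := by
    rw [range_orderEmbOfFin]
    simpa [B] using ⟨a, ha, rfl⟩
  exact ⟨i, hf (Function.invFunOn_mem (he i)) ha (by rw [Function.invFunOn_eq (he i), hi])⟩

theorem shellable_of_exchange {V β : Type*} [DecidableEq V] [LinearOrder β]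
    {S : Set (Finset V)} {d : ℕ} (hfin : S.Finite) (hne : S.Nonempty) (hpure : IsPure S d)
    (f : Finset V → β) (hf : Set.InjOn f {s | IsFacet S s})
    (hex : ∀ s ψ, IsFacet S s → IsFacet S ψ → f ψ < f s → ∀ t ⊆ s, t ⊆ ψ →
      ∃ x ∈ s, x ∉ t ∧ ∃ χ, IsFacet S χ ∧ f χ < f s ∧ s.erase x ⊆ χ) :
    Shellable S d := by
  have hfacets : {s | IsFacet S s}.Nonempty := by
    obtain ⟨s, hs, hmax⟩ := hfin.exists_maximal hne
    exact ⟨s, hs, fun t ht hst => le_antisymm hst (hmax ht hst)⟩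
  obtain ⟨N, φ, hφ, hsurj, hmono⟩ :=
    (hfin.subset fun s hs => hs.1).exists_strictMono_enum hfacets hf
  have hcover : ∀ k : Fin (N + 1), ∀ t ⊆ φ k, (∃ i : Fin (N + 1), (i : ℕ) < k ∧ t ⊆ φ i) →
      ∃ t', t ⊆ t' ∧ t' ⊆ φ k ∧ t'.card = d ∧ ∃ m : Fin (N + 1), (m : ℕ) < k ∧ t' ⊆ φ m := by
    rintro k t hts ⟨i, hik, hti⟩
    obtain ⟨x, hx, hxt, χ, hχ, hlt, hsub⟩ := hex _ _ (hφ k) (hφ i) (hmono hik) t hts hti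
    obtain ⟨m, rfl⟩ := hsurj χ hχ
    refine ⟨(φ k).erase x, subset_erase.2 ⟨hts, hxt⟩, erase_subset _ _, ?_, m,
      hmono.lt_iff_lt.1 hlt, hsub⟩
    rw [card_erase_of_mem hx, hpure _ (hφ k), Nat.add_sub_cancel]
  refine ⟨hpure, N, φ, hmono.injective.of_comp, hφ, hsurj, fun k hk => ⟨?_, ?_⟩⟩
  · obtain ⟨t', -, ht'⟩ := hcover k ∅ (empty_subset _) ⟨0, hk, empty_subset _⟩
    exact ⟨t', ht'⟩
  · exact fun t _ hts hold => hcover k t hts hold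

section Pseudosphere

variable {n : ℕ} {α : Type*} {Vs : Fin n → Finset α}

theorem pseudosphere_finite (n : ℕ) (Vs : Fin n → Finset α) : (Pseudosphere n Vs).Finite := by
  classical
  refine (univ.biUnion fun i => {i} ×ˢ Vs i).powerset.finite_toSet.subset fun s hs => ?_
  simp only [coe_powerset, Set.mem_preimage, Set.mem_powerset_iff, coe_subset]
  intro p hp
  simpa using ⟨p.1, p.2, hs.2.1 p hp, rfl⟩

theorem insert_mem_pseudosphere [DecidableEq α] {s t : Finset (Fin n × α)}
    (hs : s ∈ Pseudosphere n Vs) (hts : t ⊆ s) {i : Fin n} {u : α} (hu : u ∈ Vs i)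
    (hi : ∀ q ∈ t, q.1 ≠ i) : insert (i, u) t ∈ Pseudosphere n Vs := by
  refine ⟨insert_nonempty _ _, fun p hp => ?_, fun p hp q hq hpq => ?_⟩
  · rcases mem_insert.1 hp with rfl | hp
    exacts [hu, hs.2.1 p (hts hp)]
  · rcases mem_insert.1 hp with rfl | hp <;> rcases mem_insert.1 hq with rfl | hq
    · rfl
    · exact absurd hpq.symm (hi q hq)
    · exact absurd hpq (hi p hp)
    · exact hs.2.2 p (hts hp) q (hts hq) hpq

theorem isFacet_pseudosphere_skeleton_iff [DecidableEq α] (hVs : ∀ i, (Vs i).Nonempty)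
    {d : ℕ} (hdn : d + 1 ≤ n) {s : Finset (Fin n × α)} :
    IsFacet {s ∈ Pseudosphere n Vs | s.card ≤ d + 1} s ↔
      s ∈ Pseudosphere n Vs ∧ s.card = d + 1 := by
  refine ⟨fun ⟨⟨hs, hcard⟩, hmax⟩ => ⟨hs, hcard.antisymm ?_⟩,
    fun ⟨hs, hcard⟩ => ⟨⟨hs, hcard.le⟩, fun t ht hst => eq_of_subset_of_card_le hst ?_⟩⟩
  · by_contra! hlt
    obtain ⟨i, -, hi⟩ := exists_mem_notMem_of_card_lt_card (s := s.image Prod.fst) (t := univ)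
      (by simpa using card_image_le.trans_lt (hlt.trans_le hdn))
    obtain ⟨w, hw⟩ := hVs i
    have hfree : ∀ q ∈ s, q.1 ≠ i := fun q hq hqi => hi (mem_image.2 ⟨q, hq, hqi⟩)
    have hins := hmax _ ⟨insert_mem_pseudosphere hs subset_rfl hw hfree,
      (card_insert_le _ _).trans hlt⟩ (subset_insert _ _)
    exact hfree _ (by rw [hins]; exact mem_insert_self _ _) rfl
  · exact ht.2.trans hcard.ge

variable [LinearOrder α]

noncomputable def profile (s : Finset (Fin n × α)) (i : Fin n) : WithTop α :=
  (s.preimage (Prod.mk i) (Prod.mk_right_injective i).injOn).min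

theorem profile_eq_coe_iff {s : Finset (Fin n × α)}
    (hs : Set.InjOn Prod.fst (s : Set (Fin n × α))) {i : Fin n} {v : α} :
    profile s i = v ↔ (i, v) ∈ s := by
  refine ⟨fun h => mem_preimage.1 (mem_of_min h), fun h => ?_⟩
  have : s.preimage (Prod.mk i) (Prod.mk_right_injective i).injOn = {v} := by
    ext w
    simp only [mem_preimage, mem_singleton]
    exact ⟨fun hw => (Prod.mk.inj (hs hw h rfl)).2, by rintro rfl; exact h⟩
  rw [profile, this, min_singleton]

theorem profile_congr {s t : Finset (Fin n × α)} {i : Fin n}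
    (h : ∀ v, (i, v) ∈ s ↔ (i, v) ∈ t) : profile s i = profile t i := by
  simp only [profile]
  congr 1
  ext v
  simp [h]

theorem profile_injOn : Set.InjOn profile (Pseudosphere n Vs) := by
  intro s hs t ht h
  ext ⟨i, v⟩
  rw [← profile_eq_coe_iff hs.2.2, ← profile_eq_coe_iff ht.2.2, h]

theorem toLex_profile_insert_erase_lt {s : Finset (Fin n × α)} {x : Fin n × α} {i : Fin n}
    {u : α} (hχ : Set.InjOn Prod.fst (↑(insert (i, u) (s.erase x)) : Set (Fin n × α)))
    (hix : i ≤ x.1)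
    (hlt : (u : WithTop α) < profile s i) :
    toLex (profile (insert (i, u) (s.erase x))) < toLex (profile s) := by
  refine ⟨i, fun j hji => profile_congr fun v => ?_, ?_⟩
  · have hx : (j, v) ≠ x := fun h => (hji.trans_le hix).ne (congrArg Prod.fst h)
    simp [hji.ne, hx]
  · show profile _ i < profile s i
    rwa [(profile_eq_coe_iff hχ).2 (mem_insert_self _ _)]

theorem exists_exchange_of_toLex_profile_lt {s ψ t : Finset (Fin n × α)}
    (hs : s ∈ Pseudosphere n Vs) (hψ : ψ ∈ Pseudosphere n Vs) (hcard : ψ.card ≤ s.card)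
    (hlt : toLex (profile ψ) < toLex (profile s)) (htψ : t ⊆ ψ) :
    ∃ x ∈ s, x ∉ t ∧ ∃ χ ∈ Pseudosphere n Vs, χ.card = s.card ∧
      toLex (profile χ) < toLex (profile s) ∧ s.erase x ⊆ χ := by
  obtain ⟨i, hbelow, hi⟩ :
      ∃ i, (∀ j < i, profile ψ j = profile s j) ∧ profile ψ i < profile s i := hlt
  obtain ⟨u, hu⟩ := WithTop.ne_top_iff_exists.1 (hi.trans_le le_top).ne
  have huψ : (i, u) ∈ ψ := (profile_eq_coe_iff hψ.2.2).1 hu.symm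
  obtain ⟨x, hx, hxt, hix, hxi⟩ :
      ∃ x ∈ s, x ∉ t ∧ i ≤ x.1 ∧ ∀ v, (i, v) ∈ s → (i, v) = x := by
    by_cases hs_i : ∃ v, (i, v) ∈ s
    · obtain ⟨v, hv⟩ := hs_i
      refine ⟨(i, v), hv, fun hvt => hi.ne ?_, le_rfl, fun w hw => hs.2.2 _ hw _ hv rfl⟩
      rw [(profile_eq_coe_iff hψ.2.2).2 (htψ hvt), (profile_eq_coe_iff hs.2.2).2 hv]
    obtain ⟨x, hx, hxt, hix⟩ : ∃ x ∈ s, x ∉ t ∧ i ≤ x.1 := by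
      -- otherwise `s ⊆ ψ`, while `(i, u) ∈ ψ \ s`
      by_contra! hnone
      have hsψ : s ⊆ ψ := fun ⟨j, v⟩ hjv => by
        by_cases hjvt : (j, v) ∈ t
        · exact htψ hjvt
        rw [← profile_eq_coe_iff hψ.2.2, hbelow j (hnone _ hjv hjvt),
          profile_eq_coe_iff hs.2.2]
        exact hjv
      exact (card_lt_card ((ssubset_iff_of_subset hsψ).2 ⟨_, huψ, fun h => hs_i ⟨u, h⟩⟩)).not_ge
        hcard
    exact ⟨x, hx, hxt, hix, fun v hv => absurd ⟨v, hv⟩ hs_i⟩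
  have hfree : ∀ q ∈ s.erase x, q.1 ≠ i := by
    rintro ⟨j, v⟩ hq rfl
    exact ne_of_mem_erase hq (hxi v (mem_of_mem_erase hq))
  have hχ := insert_mem_pseudosphere hs (erase_subset x s) (hψ.2.1 _ huψ) hfree
  refine ⟨x, hx, hxt, _, hχ, ?_, toLex_profile_insert_erase_lt hχ.2.2 hix (hu ▸ hi),
    subset_insert _ _⟩
  rw [card_insert_of_notMem fun h => hfree _ h rfl, card_erase_add_one hx]

end Pseudosphere

theorem pseudosphere_skeleton_shellable_general (n : ℕ) (hn : 1 ≤ n) {α : Type*}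
    (Vs : Fin n → Finset α) (hVs : ∀ i, (Vs i).Nonempty)
    (d : ℕ) (hd : d ≤ n - 1) :
    Shellable {s ∈ Pseudosphere n Vs | s.card ≤ d + 1} d := by
  let _ : LinearOrder α := WellOrderingRel.isWellOrder.linearOrder
  have hfacet {s} := isFacet_pseudosphere_skeleton_iff (s := s) hVs (d := d) (by omega)
  obtain ⟨w, hw⟩ := hVs ⟨0, hn⟩
  refine shellable_of_exchange ((pseudosphere_finite n Vs).subset fun s hs => hs.1)
    ⟨{(⟨0, hn⟩, w)}, ⟨singleton_nonempty _, by simpa using hw, by simp⟩, by simp⟩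
    (fun s hs => (hfacet.1 hs).2) (fun s => toLex (profile s))
    (fun s hs t ht h => profile_injOn (hfacet.1 hs).1 (hfacet.1 ht).1 (toLex.injective h)) ?_
  intro s ψ hs hψ hlt t _ htψ
  rw [hfacet] at hs hψ
  obtain ⟨x, hx, hxt, χ, hχ, hχcard, hχlt, hsub⟩ :=
    exists_exchange_of_toLex_profile_lt hs.1 hψ.1 (hψ.2.trans hs.2.symm).le hlt htψ
  exact ⟨x, hx, hxt, χ, hfacet.2 ⟨hχ, hχcard.trans hs.2⟩, hχlt, hsub⟩

/-- For every `n ≥ 1`, nonempty finite sets `V_1, …, V_n`, and every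
`d ≤ n - 1`, the `d`-skeleton of the pseudosphere `Ψ({(p_i, V_i) | i ∈ [n]})` is shellable. -/
theorem pseudosphere_skeleton_shellable (n : ℕ) (hn : 1 ≤ n) {α : Type*} [DecidableEq α]
    (Vs : Fin n → Finset α) (hVs : ∀ i, (Vs i).Nonempty)
    (d : ℕ) (hd : d ≤ n - 1) :
    Shellable {s ∈ Pseudosphere n Vs | s.card ≤ d + 1} d :=
  pseudosphere_skeleton_shellable_general n hn Vs hVs d hd
end

section
/- Let σ be a facet of K_i (a pure complex of dimension n-1-ki) and define f_i(σ) = ∪_{τ ∈ Face_{n-1-k(i+1)}(σ)} Ψ(τ, [τ,σ]), where [τ,σ] = {ρ | τ ⊆ ρ ⊆ σ} and Ψ(τ,[τ,σ]) is the pseudosphere labeling each process in names(τ) independently with a simplex in [τ,σ]. Then f_i is a strict carrier map: for all faces φ_1, φ_2 of K_i, f_i(φ_1 ∩ φ_2) = f_i(φ_1) ∩ f_i(φ_2). -/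
/-- The interval `[τ, σ] = {ρ | τ ⊆ ρ ⊆ σ}` of simplices. -/
def interval {α : Type*} (τ σ : Finset α) : Set (Finset α) :=
  {ρ | τ ⊆ ρ ∧ ρ ⊆ σ}

/-- The pseudosphere over the process set `names` with label sets `Vs`: faces are nonempty
finsets of pairs `(p, v)` with `p ∈ names`, `v ∈ Vs p`, and at most one vertex per process. -/
def PSph {P L : Type*} (names : Finset P) (Vs : P → Set L) : Set (Finset (P × L)) :=
  {s | s.Nonempty ∧ (∀ x ∈ s, x.1 ∈ names ∧ x.2 ∈ Vs x.1) ∧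
       ∀ x ∈ s, ∀ y ∈ s, x.1 = y.1 → x = y}

/-- The round-`(i+1)` carrier map `f_i(σ) = ⋃_{τ ∈ Face_{n-1-k(i+1)}(σ)} Ψ(τ, [τ,σ])`:
each process of `τ` (a face of `σ` of cardinality `n - k(i+1)`) is labeled independently
with a simplex `ρ` with `τ ⊆ ρ ⊆ σ`. -/
def fmap {P Λ : Type*} [DecidableEq P] (n k i : ℕ)
    (σ : Finset (P × Λ)) : Set (Finset (P × Finset (P × Λ))) :=
  ⋃ τ ∈ {τ : Finset (P × Λ) | τ ⊆ σ ∧ τ.card = n - k * (i + 1)},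
    PSph (τ.image Prod.fst) (fun _ => interval τ σ)

/-- The carrier map `f_i` on the pure complex `K_i` of dimension
`n - 1 - k·i` is strict: `f_i(φ1 ∩ φ2) = f_i(φ1) ∩ f_i(φ2)` for all faces `φ1, φ2`. -/
theorem fmap_strict {P Λ : Type*} [DecidableEq P] [DecidableEq Λ]
    (n k i : ℕ) (hk : 1 ≤ k) (hn : k * (i + 1) < n)
    (Ki : Set (Finset (P × Λ))) (hcx : IsComplex Ki)
    (hpure : IsPure Ki (n - k * i - 1)) :
    ∀ φ1 ∈ Ki, ∀ φ2 ∈ Ki,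
      fmap n k i (φ1 ∩ φ2) = fmap n k i φ1 ∩ fmap n k i φ2 := by
  intro φ1 _ φ2 _
  ext s
  simp only [fmap, Set.mem_iUnion, Set.mem_inter_iff, Set.mem_setOf_eq, PSph, interval]
  constructor
  · rintro ⟨τ, ⟨hτsub, hτcard⟩, hne, hmem, huniq⟩
    refine ⟨⟨τ, ⟨hτsub.trans Finset.inter_subset_left, hτcard⟩, hne, ?_, huniq⟩,
           ⟨τ, ⟨hτsub.trans Finset.inter_subset_right, hτcard⟩, hne, ?_, huniq⟩⟩ <;>
      intro x hx <;>
      exact ⟨(hmem x hx).1, (hmem x hx).2.1,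
        fun a ha => Finset.mem_inter.1 ((hmem x hx).2.2 ha) |>.elim (fun h1 h2 => by first | exact h1 | exact h2)⟩
  · rintro ⟨⟨τ1, ⟨h1s, h1c⟩, hne, hmem1, huniq⟩, ⟨τ2, ⟨h2s, h2c⟩, _, hmem2, _⟩⟩
    obtain ⟨⟨p, ρ⟩, hps⟩ := hne
    have hρφ2 : ρ ⊆ φ2 := (hmem2 _ hps).2.2
    have hτ1ρ : τ1 ⊆ ρ := (hmem1 _ hps).2.1
    have hτ1 : τ1 ⊆ φ1 ∩ φ2 := fun x hx =>
      Finset.mem_inter.2 ⟨h1s hx, hρφ2 (hτ1ρ hx)⟩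
    refine ⟨τ1, ⟨hτ1, h1c⟩, ⟨⟨p, ρ⟩, hps⟩, ?_, huniq⟩
    intro x hx
    exact ⟨(hmem1 x hx).1, (hmem1 x hx).2.1,
      fun a ha => Finset.mem_inter.2 ⟨(hmem1 x hx).2.2 ha, (hmem2 x hx).2.2 ha⟩⟩
end

section
/- Let n ≥ 1, k ≥ 1. For each x = (x_1,...,x_k) ∈ ℤ^k with n ≥ x_1 ≥ ... ≥ x_k ≥ 0, define the input assignment inp(x): [n] → {0,...,k} by inp(x)(j) = |{i ∈ [k] : x_i ≥ j}|. Let I_sub be the simplicial complex on vertex set [n] × {0,...,k} whose facets are σ_x = {(j, inp(x)(j)) : j ∈ [n]} over all such x, closed under subsets. Then I_sub (the Kuhn triangulation input complex) is shellable, and the lexicographic order on the index tuples x is a shelling order of its facets. -/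
/-- `x : Fin k → ℕ` is a valid Kuhn index tuple: `n ≥ x 0 ≥ x 1 ≥ … ≥ x (k-1) ≥ 0`. -/
def validX (n k : ℕ) (x : Fin k → ℕ) : Prop :=
  (∀ i, x i ≤ n) ∧ ∀ i j : Fin k, i ≤ j → x j ≤ x i

/-- The input assignment `inp(x) : [n] → {0, …, k}` given by
`inp(x)(j) = |{i ∈ [k] : x i ≥ j}|`; here process `j : Fin n` stands for number `j + 1`. -/
def inpFun (n k : ℕ) (x : Fin k → ℕ) : Fin n → ℕ :=
  fun j => (Finset.univ.filter (fun i : Fin k => (j : ℕ) + 1 ≤ x i)).card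

/-- The facet `σ_x = {(j, inp(x)(j)) : j ∈ [n]}`. -/
def facetX (n k : ℕ) (x : Fin k → ℕ) : Finset (Fin n × ℕ) :=
  Finset.univ.image (fun j : Fin n => (j, inpFun n k x j))

/-- The Kuhn triangulation input complex `I_sub`: all nonempty subsets of the facets `σ_x`. -/
def IsubC (n k : ℕ) : Set (Finset (Fin n × ℕ)) :=
  {s | s.Nonempty ∧ ∃ x : Fin k → ℕ, validX n k x ∧ s ⊆ facetX n k x}

/-- Strict lexicographic order on index tuples. -/
def lexLt {k : ℕ} (x y : Fin k → ℕ) : Prop :=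
  ∃ i : Fin k, (∀ j : Fin k, j < i → x j = y j) ∧ x i < y i

/-!
For antitone `x`, `inp(x)` is the conjugate tuple: `i + 1 ≤ inp(x)(j) ↔ j + 1 ≤ x i`, so `σ_x`
determines `x`. If `y ≺ x` first differ at index `i`, let `i'` be the last index with
`x i' = x i`; lowering `x i'` by one gives a valid `w ≺ x` whose facet differs from `σ_x` only at
process `x i`, and `σ_y` differs from `σ_x` there as well. Hence listing the finitely many valid
tuples lexicographically is a shelling.
-/

theorem isShellingOrder_of_exists_codim_one {V : Type*} [DecidableEq V] {d N : ℕ}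
    {φ : Fin (N + 1) → Finset V} (hcard : ∀ i, (φ i).card = d + 1)
    (h : ∀ a b, a < b → ∃ c < b, φ a ∩ φ b ⊆ φ c ∩ φ b ∧ (φ b \ φ c).card = 1) :
    IsShellingOrder d N φ := by
  have hridge : ∀ b c, (φ b \ φ c).card = 1 → (φ b ∩ φ c).card = d := by
    intro b c hbc
    have := Finset.card_inter_add_card_sdiff (φ b) (φ c)
    have := hcard b
    omega
  refine fun b hb => ⟨?_, fun t _ htb ⟨a, hab, hta⟩ => ?_⟩
  · obtain ⟨c, hcb, -, hbc⟩ := h 0 b (Fin.lt_def.2 hb)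
    exact ⟨φ b ∩ φ c, Finset.inter_subset_left, hridge b c hbc, c, hcb,
      Finset.inter_subset_right⟩
  · obtain ⟨c, hcb, hsub, hbc⟩ := h a b hab
    refine ⟨φ b ∩ φ c, fun p hp => ?_, Finset.inter_subset_left, hridge b c hbc, c, hcb,
      Finset.inter_subset_right⟩
    have := hsub (Finset.mem_inter.2 ⟨hta hp, htb hp⟩)
    exact Finset.mem_inter.2 ⟨htb hp, (Finset.mem_inter.1 this).1⟩

theorem shellable_of_linearOrder {α V : Type*} [LinearOrder α] [DecidableEq V]
    {C : Set (Finset V)} {d : ℕ} {S : Set α} (hS : S.Finite) (hne : S.Nonempty)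
    (F : α → Finset V) (hinj : S.InjOn F) (hfacet : ∀ s, IsFacet C s ↔ ∃ a ∈ S, F a = s)
    (hcard : ∀ a ∈ S, (F a).card = d + 1)
    (hshell : ∀ a ∈ S, ∀ b ∈ S, a < b →
      ∃ c ∈ S, c < b ∧ F a ∩ F b ⊆ F c ∩ F b ∧ (F b \ F c).card = 1) :
    Shellable C d := by
  obtain ⟨N, hN⟩ := Nat.exists_eq_add_one_of_ne_zero (hS.toFinset_nonempty.2 hne).card_ne_zero
  let e := hS.toFinset.orderIsoOfFin hN
  have he : ∀ i, (e i : α) ∈ S := fun i => hS.mem_toFinset.1 (e i).2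
  have hsurj : ∀ a ∈ S, ∃ i, (e i : α) = a :=
    fun a ha => ⟨e.symm ⟨a, hS.mem_toFinset.2 ha⟩, by simp⟩
  refine ⟨?_, N, fun i => F (e i), ?_, fun i => (hfacet _).2 ⟨_, he i, rfl⟩, ?_, ?_⟩
  · intro s hs
    obtain ⟨a, ha, rfl⟩ := (hfacet s).1 hs
    exact hcard a ha
  · exact fun i j hij => e.injective (Subtype.ext (hinj (he i) (he j) hij))
  · intro s hs
    obtain ⟨a, ha, rfl⟩ := (hfacet s).1 hs
    obtain ⟨i, rfl⟩ := hsurj a ha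
    exact ⟨i, rfl⟩
  · refine isShellingOrder_of_exists_codim_one (fun i => hcard _ (he i)) fun a b hab => ?_
    obtain ⟨c, hc, hcb, hsub, hcard⟩ := hshell _ (he a) _ (he b) (e.strictMono hab)
    obtain ⟨i, rfl⟩ := hsurj c hc
    exact ⟨i, e.lt_iff_lt.1 hcb, hsub, hcard⟩

theorem Antitone.exists_last_eq {ι β : Type*} [LinearOrder ι] [Fintype ι] [LinearOrder β]
    {f : ι → β} (hf : Antitone f) (i : ι) :
    ∃ i', i ≤ i' ∧ f i' = f i ∧ ∀ l, i' < l → f l < f i' := by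
  classical
  let B := Finset.univ.filter fun l => f i ≤ f l
  have hiB : i ∈ B := by simp [B]
  have hmem : ∀ l, l ∈ B ↔ f i ≤ f l := by simp [B]
  set i' := B.max' ⟨i, hiB⟩
  have hii' : i ≤ i' := B.le_max' i hiB
  have heq : f i' = f i := le_antisymm (hf hii') ((hmem i').1 (B.max'_mem _))
  refine ⟨i', hii', heq, fun l hl => heq ▸ not_le.1 fun hil => ?_⟩
  exact (B.le_max' l ((hmem l).2 hil)).not_gt hl

section Kuhn

variable {n k : ℕ}

theorem validX.antitone {x : Fin k → ℕ} (hx : validX n k x) : Antitone x := fun a b => hx.2 a b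

theorem mem_facetX {x : Fin k → ℕ} {p : Fin n × ℕ} :
    p ∈ facetX n k x ↔ p.2 = inpFun n k x p.1 := by
  simp only [facetX, Finset.mem_image, Finset.mem_univ, true_and]
  exact ⟨fun ⟨j, hj⟩ => hj ▸ rfl, fun h => ⟨p.1, Prod.ext rfl h.symm⟩⟩

theorem card_facetX (x : Fin k → ℕ) : (facetX n k x).card = n := by
  rw [facetX, Finset.card_image_of_injective _ fun a b h => (Prod.ext_iff.1 h).1,
    Finset.card_univ, Fintype.card_fin]

theorem le_inpFun_iff {x : Fin k → ℕ} (hx : Antitone x) (i : Fin k) (j : Fin n) :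
    (i : ℕ) + 1 ≤ inpFun n k x j ↔ (j : ℕ) + 1 ≤ x i := by
  constructor
  · intro h
    by_contra! hlt
    have hsub : Finset.univ.filter (fun l => (j : ℕ) + 1 ≤ x l) ⊆ Finset.Iio i := fun l hl =>
      Finset.mem_Iio.2 (lt_of_not_ge fun hil => (((Finset.mem_filter.1 hl).2.trans
        (hx hil)).trans_lt hlt).false)
    have := Finset.card_le_card hsub
    rw [Fin.card_Iio] at this
    unfold inpFun at h
    omega
  · intro h
    have hsub : Finset.Iic i ⊆ Finset.univ.filter (fun l => (j : ℕ) + 1 ≤ x l) := fun l hl =>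
      Finset.mem_filter.2 ⟨Finset.mem_univ l, h.trans (hx (Finset.mem_Iic.1 hl))⟩
    have := Finset.card_le_card hsub
    rw [Fin.card_Iic] at this
    exact this

theorem facetX_injOn : Set.InjOn (facetX n k) {x | validX n k x} := by
  have key : ∀ {x y : Fin k → ℕ}, validX n k x → validX n k y →
      facetX n k x = facetX n k y → ∀ i, ¬ x i < y i := by
    intro x y hx hy hxy i hlt
    let j : Fin n := ⟨x i, hlt.trans_le (hy.1 i)⟩
    have hinp : inpFun n k x j = inpFun n k y j :=
      (mem_facetX.1 (hxy ▸ mem_facetX.2 rfl : (j, inpFun n k x j) ∈ facetX n k y))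
    have := (le_inpFun_iff hy.antitone i j).2 hlt
    rw [← hinp, le_inpFun_iff hx.antitone] at this
    exact (Nat.lt_succ_self _).not_ge this
  intro x hx y hy hxy
  funext i
  exact le_antisymm (not_lt.1 (key hy hx hxy.symm i)) (not_lt.1 (key hx hy hxy i))

theorem facetX_eq_of_subset {x y : Fin k → ℕ} (h : facetX n k x ⊆ facetX n k y) :
    facetX n k x = facetX n k y :=
  Finset.eq_of_subset_of_card_le h (by rw [card_facetX, card_facetX])

theorem isFacet_IsubC_iff (hn : 1 ≤ n) {s : Finset (Fin n × ℕ)} :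
    IsFacet (IsubC n k) s ↔ ∃ x, validX n k x ∧ facetX n k x = s := by
  have hmem : ∀ x, validX n k x → facetX n k x ∈ IsubC n k := fun x hx =>
    ⟨⟨(⟨0, hn⟩, inpFun n k x ⟨0, hn⟩), mem_facetX.2 rfl⟩, x, hx, le_rfl⟩
  constructor
  · rintro ⟨⟨-, x, hx, hsx⟩, hmax⟩
    exact ⟨x, hx, (hmax _ (hmem x hx) hsx).symm⟩
  · rintro ⟨x, hx, rfl⟩
    refine ⟨hmem x hx, fun t ⟨_, y, _, hty⟩ hxt => ?_⟩
    exact le_antisymm hxt ((facetX_eq_of_subset (hxt.trans hty)).symm ▸ hty)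

theorem validX_update_pred {x : Fin k → ℕ} (hx : validX n k x) {i : Fin k}
    (hlast : ∀ l, i < l → x l < x i) : validX n k (Function.update x i (x i - 1)) := by
  refine ⟨fun l => ?_, fun a b hab => ?_⟩
  · rcases eq_or_ne l i with rfl | hl
    · simpa using (Nat.sub_le _ _).trans (hx.1 l)
    · simpa [hl] using hx.1 l
  · by_cases ha : a = i <;> by_cases hb : b = i
    · subst ha hb; exact le_rfl
    · subst ha
      have := hlast b (lt_of_le_of_ne hab (Ne.symm hb))
      simp only [Function.update_self, Function.update_of_ne hb]
      omega
    · subst hb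
      have := hx.antitone hab
      simp only [Function.update_self, Function.update_of_ne ha]
      omega
    · simpa only [Function.update_of_ne ha, Function.update_of_ne hb] using hx.antitone hab

theorem lexLt_update_pred {x : Fin k → ℕ} {i : Fin k} (hi : 0 < x i) :
    lexLt (Function.update x i (x i - 1)) x :=
  ⟨i, fun _ hj => Function.update_of_ne hj.ne _ _, by simp only [Function.update_self]; omega⟩

theorem inpFun_update_pred_of_ne {x : Fin k → ℕ} {i : Fin k} {j : Fin n}
    (hj : (j : ℕ) + 1 ≠ x i) :
    inpFun n k (Function.update x i (x i - 1)) j = inpFun n k x j := by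
  unfold inpFun
  congr 1
  refine Finset.filter_congr fun l _ => ?_
  rcases eq_or_ne l i with rfl | hl
  · simp only [Function.update_self]; omega
  · rw [Function.update_of_ne hl]

theorem facetX_inter_subset {x y w : Fin k → ℕ} {j₀ : Fin n}
    (hw : ∀ j ≠ j₀, inpFun n k w j = inpFun n k x j)
    (hy : inpFun n k y j₀ ≠ inpFun n k x j₀) :
    facetX n k y ∩ facetX n k x ⊆ facetX n k w ∩ facetX n k x := by
  intro p hp
  obtain ⟨hpy, hpx⟩ := Finset.mem_inter.1 hp
  rw [mem_facetX] at hpy hpx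
  have hp₀ : p.1 ≠ j₀ := fun h => hy (h ▸ hpy.symm.trans hpx)
  exact Finset.mem_inter.2 ⟨mem_facetX.2 (hpx.trans (hw _ hp₀).symm), mem_facetX.2 hpx⟩

theorem card_facetX_sdiff_eq_one {x w : Fin k → ℕ} {j₀ : Fin n}
    (hw : ∀ j ≠ j₀, inpFun n k w j = inpFun n k x j)
    (hw₀ : inpFun n k w j₀ ≠ inpFun n k x j₀) :
    (facetX n k x \ facetX n k w).card = 1 := by
  rw [Finset.card_eq_one]
  refine ⟨(j₀, inpFun n k x j₀), Finset.ext fun p => ?_⟩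
  simp only [Finset.mem_sdiff, Finset.mem_singleton, mem_facetX]
  constructor
  · rintro ⟨hpx, hpw⟩
    have hp₀ : p.1 = j₀ := by_contra fun h => hpw (hpx.trans (hw _ h).symm)
    exact Prod.ext hp₀ (hp₀ ▸ hpx)
  · rintro rfl
    exact ⟨rfl, Ne.symm hw₀⟩

theorem exists_adjacent_facetX {x y : Fin k → ℕ} (hx : validX n k x) (hy : validX n k y)
    (hyx : lexLt y x) :
    ∃ w, validX n k w ∧ lexLt w x ∧
      facetX n k y ∩ facetX n k x ⊆ facetX n k w ∩ facetX n k x ∧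
      (facetX n k x \ facetX n k w).card = 1 := by
  obtain ⟨i, -, hyi⟩ := hyx
  obtain ⟨i', hii', hxi', hlast⟩ := hx.antitone.exists_last_eq i
  set w := Function.update x i' (x i' - 1)
  have hw : validX n k w := validX_update_pred hx hlast
  let j₀ : Fin n := ⟨x i' - 1, by have := hx.1 i'; omega⟩
  have hj₀ : (j₀ : ℕ) + 1 = x i' := by simp only [j₀]; omega
  have hoff : ∀ j ≠ j₀, inpFun n k w j = inpFun n k x j := fun j hj =>
    inpFun_update_pred_of_ne fun h => hj (Fin.ext (by simp only [j₀]; omega))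
  have hx₀ : (i' : ℕ) + 1 ≤ inpFun n k x j₀ := (le_inpFun_iff hx.antitone i' j₀).2 hj₀.le
  have hw₀ : inpFun n k w j₀ < (i' : ℕ) + 1 := by
    rw [← not_le, le_inpFun_iff hw.antitone]
    simp only [w, Function.update_self]
    omega
  have hy₀ : inpFun n k y j₀ < (i : ℕ) + 1 := by
    rw [← not_le, le_inpFun_iff hy.antitone]
    omega
  have hi_le : (i : ℕ) ≤ i' := hii'
  exact ⟨w, hw, lexLt_update_pred (by omega), facetX_inter_subset hoff (by omega),
    card_facetX_sdiff_eq_one hoff (by omega)⟩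

end Kuhn

theorem kuhn_shellable_general (n k : ℕ) (hn : 1 ≤ n) :
    Shellable (IsubC n k) (n - 1) ∧
    (∀ x y : Fin k → ℕ, validX n k x → validX n k y → lexLt y x →
      ∃ w : Fin k → ℕ, validX n k w ∧ lexLt w x ∧
        facetX n k y ∩ facetX n k x ⊆ facetX n k w ∩ facetX n k x ∧
        (facetX n k x \ facetX n k w).card = 1) := by
  let S : Set (Lex (Fin k → ℕ)) := ofLex ⁻¹' {x | validX n k x}
  have hS : S.Finite := Set.Finite.preimage ofLex.injective.injOn
    ((Set.Finite.pi fun _ => Set.finite_Iic n).subset fun x hx => Set.mem_univ_pi.2 hx.1)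
  have hne : S.Nonempty := ⟨toLex 0, fun _ => Nat.zero_le n, fun _ _ _ => le_rfl⟩
  refine ⟨shellable_of_linearOrder hS hne (fun a => facetX n k (ofLex a))
    (fun a ha b hb h => facetX_injOn ha hb h) (fun s => ?_) (fun a _ => ?_)
    (fun a ha b hb hab => ?_), fun x y hx hy => exists_adjacent_facetX hx hy⟩
  · rw [isFacet_IsubC_iff hn]
    exact ⟨fun ⟨x, hx, h⟩ => ⟨toLex x, hx, h⟩, fun ⟨a, ha, h⟩ => ⟨ofLex a, ha, h⟩⟩
  · rw [card_facetX]; omega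
  · obtain ⟨w, hw, hwb, h⟩ := exists_adjacent_facetX hb ha hab
    exact ⟨toLex w, hw, hwb, h⟩

/-- The Kuhn triangulation input complex `I_sub` is shellable, and the
lexicographic order on the index tuples is a shelling order of its facets, i.e. for all
valid `x, y` with `y ≺ x` there is a valid `w ≺ x` with `σ_y ∩ σ_x ⊆ σ_w ∩ σ_x` and
`|σ_x ∖ σ_w| = 1`. -/
theorem kuhn_shellable (n k : ℕ) (hn : 1 ≤ n) (hk : 1 ≤ k) :
    Shellable (IsubC n k) (n - 1) ∧
    (∀ x y : Fin k → ℕ, validX n k x → validX n k y → lexLt y x →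
      ∃ w : Fin k → ℕ, validX n k w ∧ lexLt w x ∧
        facetX n k y ∩ facetX n k x ⊆ facetX n k w ∩ facetX n k x ∧
        (facetX n k x \ facetX n k w).card = 1) :=
  kuhn_shellable_general n k hn
end

section
/- Let x, y ∈ ℤ^k with n ≥ x_1 ≥ ... ≥ x_k ≥ 0 and n ≥ y_1 ≥ ... ≥ y_k ≥ 0, and suppose y ≺ x in lexicographic order with y_i < x_i at some index i. Define w ∈ ℤ^k by w_j = x_j - 1 for all j in ind(x,i) = {j : x_j = x_i} and w_j = x_j otherwise. Then: (1) w satisfies n ≥ w_1 ≥ ... ≥ w_k ≥ 0; (2) w ≺ x lexicographically; (3) the assignments inp(w) and inp(x) differ exactly at the single position x_i; i.e., |{j ∈ [n] : inp(w)(j) ≠ inp(x)(j)}| = 1 with the unique difference at j = x_i. -/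
/-- Let `x, y` be valid index tuples with `y ≺ x` lexicographically,
differing first at index `i` with `y i < x i`. Define `w` by decrementing all coordinates of
`x` equal to `x i`. Then `w` is valid, `w ≺ x`, and the assignments `inp(w)` and `inp(x)`
differ exactly at the single position `x i` (process `j` with `j + 1 = x i`). -/
theorem kuhn_w_construction (n k : ℕ) (x y : Fin k → ℕ)
    (hx : validX n k x) (hy : validX n k y)
    (i : Fin k) (hfirst : ∀ j : Fin k, j < i → y j = x j) (hlt : y i < x i) :
    validX n k (fun j => if x j = x i then x j - 1 else x j) ∧
    lexLt (fun j => if x j = x i then x j - 1 else x j) x ∧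
    (∀ j : Fin n,
      inpFun n k (fun j' => if x j' = x i then x j' - 1 else x j') j ≠ inpFun n k x j ↔
        (j : ℕ) + 1 = x i) := by
  have hxi : 0 < x i := Nat.lt_of_le_of_lt (Nat.zero_le _) hlt
  obtain ⟨hxn, hxmono⟩ := hx
  refine ⟨⟨?_, ?_⟩, ?_, ?_⟩
  · intro j; dsimp only; split
    · exact le_trans (Nat.sub_le _ _) (hxn j)
    · exact hxn j
  · intro a b hab; dsimp only
    have h := hxmono a b hab
    by_cases hb : x b = x i <;> by_cases ha : x a = x i <;> simp [ha, hb] <;> omega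
  · have hne : (Finset.univ.filter (fun j : Fin k => x j = x i)).Nonempty := ⟨i, by simp⟩
    set S := Finset.univ.filter (fun j : Fin k => x j = x i) with hS
    refine ⟨S.min' hne, ?_, ?_⟩
    · intro j hj
      have hjS : j ∉ S := fun h => absurd (S.min'_le j h) (not_le.mpr hj)
      have hne' : x j ≠ x i := by simpa [hS] using hjS
      simp [hne']
    · have hm : x (S.min' hne) = x i := by
        have := S.min'_mem hne; simpa [hS] using this
      simp only []
      rw [if_pos hm, hm]
      omega
  · intro j
    by_cases hj : (j : ℕ) + 1 = x i
    · refine ⟨fun _ => hj, fun _ => ?_⟩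
      simp only [inpFun, ne_eq]
      have hsub : (Finset.univ.filter fun a : Fin k =>
          (j:ℕ)+1 ≤ (if x a = x i then x a - 1 else x a)) ⊂
          Finset.univ.filter fun a : Fin k => (j:ℕ)+1 ≤ x a := by
        constructor
        · intro a ha
          simp only [Finset.mem_filter, Finset.mem_univ, true_and] at *
          split at ha <;> omega
        · intro hcon
          have hix : i ∈ Finset.univ.filter fun a : Fin k => (j:ℕ)+1 ≤ x a := by
            simp only [Finset.mem_filter, Finset.mem_univ, true_and]; omega
          have := hcon hix
          rw [Finset.mem_filter] at this
          have h2 := this.2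
          rw [if_pos rfl] at h2
          omega
      exact Nat.ne_of_lt (Finset.card_lt_card hsub)
    · simp only [hj, iff_false, ne_eq, not_not, inpFun]
      congr 1
      apply Finset.filter_congr
      intro a _
      split <;> omega
end
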